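/- arXiv:1612.07591 — 3 statements merged into one kernel-verified Lean document; each statement's English description precedes it below -/
import Mathlib

section
/- J(x) + x/(1-xq) · J(xq) = H(xq), where J and H are the q-series J(x) = Σ_{n≥0} (-x)^n q^{C(n,2)} / ((q;q)_n (xq;q)_n) and H(x) = Σ_{n≥0} (-x)^n q^{C(n,2)} / ((q;q)_n (x;q)_n). -/
/-!
All three series are sums of terms `a_n x^n / (x q^s; q)_n`. Substituting `x ↦ xq` multiplies
`a_n` by `q^n` and turns `(xq^s; q)_n` into `(xq^(s+1); q)_n`, and `x / (1 - xq)` supplies the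
missing first factor, so `x/(1-xq) · J(xq) = Σ c_n q^n x^(n+1) / (xq; q)_(n+1)` with
`c_n = (-1)^n q^C(n,2) / (q;q)_n`. Shifting this sum by one, the identity holds term by term
because `c_(n+1) (1 - q^(n+1)) = -q^n c_n`.
-/

open PowerSeries

noncomputable section
namespace FC

/-- The field `ℚ(q)` of rational functions in `q`. -/
abbrev K : Type := RatFunc ℚ

/-- The variable `q`. -/
def q : K := RatFunc.X

/-- The q-Pochhammer symbol `(a; q)_n = ∏_{i=0}^{n-1} (1 - a q^i)`. -/
def poch (a : K) (n : ℕ) : K := ∏ i ∈ Finset.range n, (1 - a * q ^ i)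

/-- The power series `(x q^s; q)_n = ∏_{i=0}^{n-1} (1 - q^{s+i} x)` in the variable `x`. -/
def pochX (s n : ℕ) : PowerSeries K :=
  ∏ i ∈ Finset.range n, (1 - PowerSeries.C (q ^ (s + i)) * PowerSeries.X)

/-- `J(x) = Σ_{n≥0} (-x)^n q^{C(n,2)} / ((q;q)_n (xq;q)_n)`, defined coefficientwise:
the coefficient of `x^N` is `Σ_{n=0}^{N} (-1)^n q^{C(n,2)}/(q;q)_n · [x^{N-n}] (xq;q)_n⁻¹`. -/
def J : PowerSeries K :=
  PowerSeries.mk fun N => ∑ n ∈ Finset.range (N + 1),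
    ((-1 : K) ^ n * q ^ n.choose 2 / poch q n) * PowerSeries.coeff (N - n) (pochX 1 n)⁻¹

/-- `H(x) = Σ_{n≥0} (-x)^n q^{C(n,2)} / ((q;q)_n (x;q)_n)`. -/
def H : PowerSeries K :=
  PowerSeries.mk fun N => ∑ n ∈ Finset.range (N + 1),
    ((-1 : K) ^ n * q ^ n.choose 2 / poch q n) * PowerSeries.coeff (N - n) (pochX 0 n)⁻¹

/-- `K(x) = Σ_{n≥0} (x^n q^{n(n+1)/2} / (xq;q)_n) · Σ_{k=0}^n (-1)^k/(q;q)_k`. -/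
def Kq : PowerSeries K :=
  PowerSeries.mk fun N => ∑ n ∈ Finset.range (N + 1),
    (q ^ (n * (n + 1) / 2) * ∑ k ∈ Finset.range (n + 1), (-1 : K) ^ k / poch q k) *
      PowerSeries.coeff (N - n) (pochX 1 n)⁻¹

end FC

namespace PowerSeries.WithPiTopology

open Finset

variable {R : Type*} [TopologicalSpace R]

theorem hasSum_C_mul_X_pow_mul [Semiring R] (a : ℕ → R) (f : ℕ → R⟦X⟧) :
    HasSum (fun n => C (a n) * X ^ n * f n)
      (mk fun N => ∑ n ∈ range (N + 1), a n * coeff (N - n) (f n)) := by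
  rw [hasSum_iff_hasSum_coeff]
  intro N
  have hcoeff (n : ℕ) : coeff N (C (a n) * X ^ n * f n)
      = if n ≤ N then a n * coeff (N - n) (f n) else 0 := by
    rw [(commute_X_pow _ n).eq, mul_assoc, coeff_X_pow_mul', coeff_C_mul]
  have hfinite := hasSum_sum_of_ne_finset_zero (L := SummationFilter.unconditional ℕ)
    (f := fun n => coeff N (C (a n) * X ^ n * f n)) (s := range (N + 1))
    fun n hn => by rw [hcoeff, if_neg (by simpa [Nat.lt_succ_iff] using hn)]
  rw [coeff_mk]
  convert hfinite using 1
  exact sum_congr rfl fun n hn => by rw [hcoeff, if_pos (by simpa [Nat.lt_succ_iff] using hn)]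

theorem _root_.HasSum.rescale [CommSemiring R] [IsTopologicalSemiring R] {ι : Type*}
    {f : ι → R⟦X⟧} {g : R⟦X⟧} (h : HasSum f g) (a : R) :
    HasSum (fun i => rescale a (f i)) (rescale a g) := by
  rw [hasSum_iff_hasSum_coeff] at h ⊢
  intro d
  simpa only [coeff_rescale] using (h d).mul_left (a ^ d)

end PowerSeries.WithPiTopology

namespace PowerSeries

theorem rescale_C {R : Type*} [CommSemiring R] (a r : R) : rescale a (C r) = C r := by
  ext n
  rcases n with _ | n <;> simp [coeff_rescale, coeff_C]

theorem rescale_inv {k : Type*} [Field k] (a : k) (φ : k⟦X⟧) :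
    rescale a φ⁻¹ = (rescale a φ)⁻¹ := by
  have hc : constantCoeff (rescale a φ) = constantCoeff φ := by
    rw [← coeff_zero_eq_constantCoeff_apply, coeff_rescale, pow_zero, one_mul,
      coeff_zero_eq_constantCoeff_apply]
  by_cases h : constantCoeff φ = 0
  · rw [inv_eq_zero.mpr h, inv_eq_zero.mpr (hc.trans h), map_zero]
  · rw [PowerSeries.eq_inv_iff_mul_eq_one (hc ▸ h), ← map_mul, PowerSeries.inv_mul_cancel φ h,
      map_one]

end PowerSeries

theorem RatFunc.X_pow_ne_one {F : Type*} [Field F] {n : ℕ} (hn : n ≠ 0) :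
    (RatFunc.X : RatFunc F) ^ n ≠ 1 := by
  rw [← RatFunc.algebraMap_X, ← map_pow, ← map_one (algebraMap (Polynomial F) (RatFunc F)), Ne,
    (IsFractionRing.injective (Polynomial F) (RatFunc F)).eq_iff]
  intro h
  simpa [hn] using congrArg Polynomial.natDegree h

namespace FC

open scoped PowerSeries.WithPiTopology

def jCoeff (n : ℕ) : K := (-1 : K) ^ n * q ^ n.choose 2 / poch q n

theorem jCoeff_succ (n : ℕ) : jCoeff (n + 1) = -(jCoeff n * q ^ n) / (1 - q ^ (n + 1)) := by
  have hpoch : poch q (n + 1) = poch q n * (1 - q ^ (n + 1)) := by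
    rw [poch, poch, Finset.prod_range_succ, pow_succ']
  rw [jCoeff, jCoeff, hpoch, Nat.choose_succ_succ' n 1, Nat.choose_one_right, ← div_div]
  ring

theorem jCoeff_succ_add_jCoeff_mul_q_pow (n : ℕ) :
    jCoeff (n + 1) + jCoeff n * q ^ n = jCoeff (n + 1) * q ^ (n + 1) := by
  have hq : 1 - q ^ (n + 1) ≠ 0 := sub_ne_zero.mpr (RatFunc.X_pow_ne_one n.succ_ne_zero).symm
  rw [jCoeff_succ]
  field_simp
  ring

theorem pochX_succ (s n : ℕ) :
    pochX s (n + 1) = (1 - C (q ^ s) * X) * pochX (s + 1) n := by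
  rw [pochX, pochX, Finset.prod_range_succ', add_zero, mul_comm]
  simp only [add_assoc, add_comm 1]

theorem rescale_pochX (s n : ℕ) : rescale q (pochX s n) = pochX (s + 1) n := by
  simp only [pochX, map_prod, map_sub, map_one, map_mul, rescale_C, rescale_X]
  refine Finset.prod_congr rfl fun i _ => ?_
  rw [← mul_assoc, ← map_mul, ← pow_succ, add_right_comm]

def pochTerm (s : ℕ) (a : ℕ → K) (n : ℕ) : K⟦X⟧ := C (a n) * X ^ n * (pochX s n)⁻¹

theorem rescale_pochTerm (s : ℕ) (a : ℕ → K) (n : ℕ) :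
    rescale q (pochTerm s a n) = pochTerm (s + 1) (fun m => a m * q ^ m) n := by
  rw [pochTerm, pochTerm, map_mul, map_mul, map_pow, rescale_inv, rescale_pochX, rescale_C,
    rescale_X, map_mul, mul_pow, ← map_pow]
  ring

theorem X_mul_inv_mul_pochTerm (s : ℕ) (a : ℕ → K) (n : ℕ) :
    X * (1 - C (q ^ s) * X)⁻¹ * pochTerm (s + 1) a n
      = C (a n) * X ^ (n + 1) * (pochX s (n + 1))⁻¹ := by
  rw [pochTerm, pochX_succ, PowerSeries.mul_inv_rev]
  ring

theorem pochTerm_succ_add (s n : ℕ) :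
    pochTerm s jCoeff (n + 1) + C (jCoeff n * q ^ n) * X ^ (n + 1) * (pochX s (n + 1))⁻¹
      = pochTerm s (fun m => jCoeff m * q ^ m) (n + 1) := by
  rw [pochTerm, pochTerm, ← jCoeff_succ_add_jCoeff_mul_q_pow, map_add, add_mul, add_mul]

/- Sums are taken coefficientwise; every coefficient sum is finite, so any Hausdorff ring
topology on `K` would do (Mathlib's instance is a valuation topology). -/
theorem hasSum_J : HasSum (pochTerm 1 jCoeff) J :=
  PowerSeries.WithPiTopology.hasSum_C_mul_X_pow_mul _ _

theorem hasSum_H : HasSum (pochTerm 0 jCoeff) H :=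
  PowerSeries.WithPiTopology.hasSum_C_mul_X_pow_mul _ _

/-- `J(x) + x/(1-xq)·J(xq) = H(xq)`. -/
theorem stmt1 :
    J + PowerSeries.X * (1 - PowerSeries.C q * PowerSeries.X)⁻¹ * rescale q J
      = rescale q H := by
  have hH : HasSum (pochTerm 1 fun m => jCoeff m * q ^ m) (rescale q H) := by
    simpa only [rescale_pochTerm] using hasSum_H.rescale q
  have hM : HasSum (fun n => C (jCoeff n * q ^ n) * X ^ (n + 1) * (pochX 1 (n + 1))⁻¹)
      (X * (1 - C q * X)⁻¹ * rescale q J) := by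
    have h := (hasSum_J.rescale q).mul_left (X * (1 - C (q ^ 1) * X)⁻¹)
    simp only [rescale_pochTerm, X_mul_inv_mul_pochTerm] at h
    rwa [pow_one] at h
  have htail := ((hasSum_nat_add_iff' 1).mpr hasSum_J).add hM
  simp only [pochTerm_succ_add] at htail
  have h := htail.unique ((hasSum_nat_add_iff' 1).mpr hH)
  have h0 : pochTerm 1 (fun m => jCoeff m * q ^ m) 0 = pochTerm 1 jCoeff 0 := by
    simp [pochTerm]
  rw [Finset.sum_range_one, Finset.sum_range_one, h0] at h
  linear_combination h

end FC
end
end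

section
/- Let J-cal(x) = Σ_{n≥0} (-1)^{⌈n/2⌉} x^n q^{n(n-1)/2} / (q²;q²)_{⌊n/2⌋} and let Je(x) be its even part in x, i.e., Je(x) = (J-cal(x)+J-cal(-x))/2. Then J-cal(x) = Je(x) - x·Je(xq), and Je satisfies Je(x) - Je(xq) + x²q·Je(xq²) = 0. -/
/-!
The coefficients `aₙ` of `𝒥` satisfy `a₂ₘ₊₁ = -q²ᵐ a₂ₘ` and `(1 - q²ᵐ⁺²) a₂ₘ₊₂ = -q⁴ᵐ⁺¹ a₂ₘ`.
Since `𝒥ₑ` keeps exactly the even coefficients, the first relation says that the odd part of `𝒥`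
is `-x 𝒥ₑ(xq)`, and the second is the coefficient of `x²ᵐ⁺²` in the `q`-difference equation.
-/

open PowerSeries

noncomputable section
namespace FC

/-- `(q²;q²)_m = ∏_{i=1}^{m} (1 - q^{2i})`. -/
def poch2 (m : ℕ) : K := ∏ i ∈ Finset.range m, (1 - q ^ (2 * (i + 1)))

/-- `𝒥(x) = Σ_{n≥0} (-1)^{⌈n/2⌉} x^n q^{C(n,2)} / (q²;q²)_{⌊n/2⌋}`. -/
def Jcal : PowerSeries K :=
  PowerSeries.mk fun n => (-1 : K) ^ ((n + 1) / 2) * q ^ n.choose 2 / poch2 (n / 2)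

/-- `𝒦(x) = Σ_{n≥0} x^n q^{n(n+1)/2} Σ_{k=0}^{⌊n/2⌋} (-1)^k/(q²;q²)_k`. -/
def Kcal : PowerSeries K :=
  PowerSeries.mk fun n =>
    q ^ (n * (n + 1) / 2) * ∑ k ∈ Finset.range (n / 2 + 1), (-1 : K) ^ k / poch2 k

/-- The even part `𝒥ₑ(x) = (𝒥(x) + 𝒥(-x))/2`. -/
def Je : PowerSeries K := PowerSeries.C (R := K) (1 / 2) * (Jcal + rescale (-1) Jcal)

section EvenPart

variable {R : Type*}

def evenPart [Semiring R] (f : R⟦X⟧) : R⟦X⟧ := mk fun n => if Even n then coeff n f else 0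

@[simp]
theorem coeff_evenPart [Semiring R] (f : R⟦X⟧) (n : ℕ) :
    coeff n (evenPart f) = if Even n then coeff n f else 0 :=
  coeff_mk _ _

theorem C_half_mul_add_rescale_neg_one [Field R] [NeZero (2 : R)] (f : R⟦X⟧) :
    C (1 / 2 : R) * (f + rescale (-1) f) = evenPart f := by
  ext n
  rw [coeff_C_mul, map_add, coeff_rescale, coeff_evenPart]
  rcases Nat.even_or_odd n with hn | hn
  · rw [if_pos hn, hn.neg_one_pow]
    field_simp
    ring
  · rw [if_neg (Nat.not_even_iff_odd.mpr hn), hn.neg_one_pow]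
    ring

variable [CommRing R] {c : R} {f : R⟦X⟧}

theorem eq_evenPart_sub_X_mul_rescale
    (hodd : ∀ m, coeff (2 * m + 1) f = -(c ^ (2 * m) * coeff (2 * m) f)) :
    f = evenPart f - X * rescale c (evenPart f) := by
  ext n
  rcases n with _ | n
  · rw [map_sub, coeff_zero_X_mul, sub_zero, coeff_evenPart, if_pos Even.zero]
  rw [map_sub, coeff_succ_X_mul, coeff_rescale]
  obtain ⟨m, rfl | rfl⟩ := Nat.even_or_odd' n
  · simp [hodd, parity_simps]
  · simp [show 2 * m + 1 + 1 = 2 * (m + 1) by ring, parity_simps]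

theorem evenPart_sub_rescale_add_X_sq_mul_rescale_sq
    (hrec : ∀ m,
      coeff (2 * m + 2) f * (1 - c ^ (2 * m + 2)) = -(c ^ (4 * m + 1) * coeff (2 * m) f)) :
    evenPart f - rescale c (evenPart f) + X ^ 2 * C c * rescale (c ^ 2) (evenPart f) = 0 := by
  ext n
  rw [map_add, map_sub, mul_assoc, coeff_X_pow_mul', coeff_rescale, map_zero]
  rcases n with _ | _ | n
  · simp
  · simp
  rw [if_pos (by omega), show n + 1 + 1 - 2 = n by omega, coeff_C_mul, coeff_rescale,
    coeff_evenPart, coeff_evenPart]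
  obtain ⟨m, rfl | rfl⟩ := Nat.even_or_odd' n
  · rw [if_pos (by simp [parity_simps]), if_pos (even_two_mul m)]
    linear_combination hrec m
  · simp [parity_simps]

end EvenPart

theorem q_pow_ne_one {k : ℕ} (hk : k ≠ 0) : q ^ k ≠ 1 := by
  rw [q, ← RatFunc.algebraMap_X, ← map_pow, Ne, ← map_one (algebraMap (Polynomial ℚ) K),
    (RatFunc.algebraMap_injective ℚ).eq_iff]
  exact fun h => hk (by simpa using congrArg Polynomial.natDegree h)

theorem Je_eq_evenPart : Je = evenPart Jcal := C_half_mul_add_rescale_neg_one Jcal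

theorem coeff_Jcal (n : ℕ) :
    coeff n Jcal = (-1 : K) ^ ((n + 1) / 2) * q ^ n.choose 2 / poch2 (n / 2) :=
  coeff_mk _ _

theorem choose_two_succ (n : ℕ) : (n + 1).choose 2 = n + n.choose 2 := by
  rw [Nat.choose_succ_succ', Nat.choose_one_right]

theorem coeff_Jcal_two_mul_add_one (m : ℕ) :
    coeff (2 * m + 1) Jcal = -(q ^ (2 * m) * coeff (2 * m) Jcal) := by
  rw [coeff_Jcal, coeff_Jcal, show (2 * m + 1 + 1) / 2 = m + 1 by omega,
    show (2 * m + 1) / 2 = m by omega, Nat.mul_div_cancel_left _ two_pos,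
    choose_two_succ, pow_add, pow_succ]
  ring

theorem coeff_Jcal_two_mul_add_two (m : ℕ) :
    coeff (2 * m + 2) Jcal * (1 - q ^ (2 * m + 2)) = -(q ^ (4 * m + 1) * coeff (2 * m) Jcal) := by
  have hchoose : (2 * m + 2).choose 2 = 4 * m + 1 + (2 * m).choose 2 := by
    rw [choose_two_succ, choose_two_succ]; omega
  have hpoch : poch2 (m + 1) = poch2 m * (1 - q ^ (2 * m + 2)) := Finset.prod_range_succ _ _
  have hne : 1 - q ^ (2 * m + 2) ≠ 0 := sub_ne_zero.mpr (q_pow_ne_one (by omega)).symm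
  rw [coeff_Jcal, coeff_Jcal, show (2 * m + 2 + 1) / 2 = m + 1 by omega,
    show (2 * m + 2) / 2 = m + 1 by omega, show (2 * m + 1) / 2 = m by omega,
    Nat.mul_div_cancel_left _ two_pos, hchoose, hpoch, div_mul_eq_div_div, div_mul_cancel₀ _ hne,
    pow_add, pow_succ]
  ring

/-- `𝒥(x) = 𝒥ₑ(x) - x·𝒥ₑ(xq)` and `𝒥ₑ(x) - 𝒥ₑ(xq) + x²q·𝒥ₑ(xq²) = 0`. -/
theorem stmt9 :
    Jcal = Je - PowerSeries.X * rescale q Je ∧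
    Je - rescale q Je + PowerSeries.X ^ 2 * PowerSeries.C (R := K) q * rescale (q ^ 2) Je = 0 := by
  rw [Je_eq_evenPart]
  exact ⟨eq_evenPart_sub_X_mul_rescale coeff_Jcal_two_mul_add_one,
    evenPart_sub_rescale_add_X_sq_mul_rescale_sq coeff_Jcal_two_mul_add_two⟩

end FC
end
end

section
/- The series K-cal(x) = Σ_{n≥0} x^n q^{n(n+1)/2} Σ_{k=0}^{⌊n/2⌋} (-1)^k/(q²;q²)_k satisfies the third-order linear q-difference equation K-cal(x) - (1+xq)·K-cal(xq) + xq²(1+xq)·K-cal(xq²) - x³q⁶·K-cal(xq³) = 0. -/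
/-!
With `Kdiff(x) = 𝒦(x) - x q 𝒦(x q)` the operator factors as
`Kdiff(x) - Kdiff(x q) + x² q³ Kdiff(x q²)`. Since `q^((n+1)(n+2)/2) = q^(n+1) q^(n(n+1)/2)`,
the coefficients of `Kdiff` are `q^(n(n+1)/2)` times differences of consecutive partial sums of
`Σ (-1)^k / (q²;q²)_k`, so `Kdiff(x) = Σ_m (-1)^m q^(m(2m+1)) x^(2m) / (q²;q²)_m`, and the
factored equation comes down to `(1 - q^(2m)) / (q²;q²)_m = 1 / (q²;q²)_(m-1)`.
-/

open PowerSeries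

noncomputable section
namespace FC

lemma rescale_C {R : Type*} [CommSemiring R] (a c : R) : rescale a (C c) = C c := by
  ext n
  rcases n with _ | n <;> simp [coeff_C]

lemma qDifference_factor {R : Type*} [CommRing R] (a : R) (f : PowerSeries R) :
    f - (1 + C a * X) * rescale a f + X * C (a ^ 2) * (1 + C a * X) * rescale (a ^ 2) f
        - X ^ 3 * C (a ^ 6) * rescale (a ^ 3) f =
      (f - C a * X * rescale a f) - rescale a (f - C a * X * rescale a f)
        + X ^ 2 * C (a ^ 3) * rescale (a ^ 2) (f - C a * X * rescale a f) := by
  simp only [map_sub, map_mul, rescale_X, rescale_C, rescale_rescale, map_pow]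
  ring_nf

lemma coeff_succ_sub_C_mul_X_mul_rescale {R : Type*} [CommRing R] (a : R) (f : PowerSeries R)
    (n : ℕ) :
    coeff (n + 1) (f - C a * X * rescale a f) = coeff (n + 1) f - a ^ (n + 1) * coeff n f := by
  rw [map_sub, mul_assoc, coeff_C_mul, coeff_succ_X_mul, coeff_rescale, ← mul_assoc, ← pow_succ']

lemma succ_mul_succ_div_two (n : ℕ) : (n + 1) * (n + 1 + 1) / 2 = n * (n + 1) / 2 + (n + 1) := by
  rw [show (n + 1) * (n + 1 + 1) = n * (n + 1) + 2 * (n + 1) by ring,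
    Nat.add_mul_div_left _ _ two_pos]

lemma one_sub_q_pow_ne_zero {k : ℕ} (hk : k ≠ 0) : 1 - q ^ k ≠ 0 := by
  rw [sub_ne_zero, ne_comm, q, ← RatFunc.algebraMap_X, ← map_pow,
    ← map_one (algebraMap (Polynomial ℚ) (RatFunc ℚ)), (RatFunc.algebraMap_injective ℚ).ne_iff]
  intro h
  simpa [hk] using congrArg Polynomial.natDegree h

lemma poch2_succ (m : ℕ) : poch2 (m + 1) = poch2 m * (1 - q ^ (2 * (m + 1))) :=
  Finset.prod_range_succ _ _

lemma poch2_ne_zero (m : ℕ) : poch2 m ≠ 0 :=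
  Finset.prod_ne_zero_iff.mpr fun _ _ => one_sub_q_pow_ne_zero (by omega)

def Kdiff : PowerSeries K := Kcal - C q * X * rescale q Kcal

lemma coeff_succ_Kdiff (n : ℕ) :
    coeff (n + 1) Kdiff = q ^ ((n + 1) * (n + 1 + 1) / 2) *
      (∑ k ∈ Finset.range ((n + 1) / 2 + 1), (-1 : K) ^ k / poch2 k
        - ∑ k ∈ Finset.range (n / 2 + 1), (-1 : K) ^ k / poch2 k) := by
  rw [Kdiff, coeff_succ_sub_C_mul_X_mul_rescale, Kcal, coeff_mk, coeff_mk, succ_mul_succ_div_two,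
    pow_add]
  ring

lemma coeff_Kdiff_odd (m : ℕ) : coeff (2 * m + 1) Kdiff = 0 := by
  rw [coeff_succ_Kdiff, show (2 * m + 1) / 2 = 2 * m / 2 by omega, sub_self, mul_zero]

lemma coeff_Kdiff_even (m : ℕ) :
    coeff (2 * m) Kdiff = (-1) ^ m * q ^ (2 * m * (2 * m + 1) / 2) / poch2 m := by
  rcases m with _ | m
  · simp [Kdiff, Kcal, poch2]
  · rw [show 2 * (m + 1) = 2 * m + 1 + 1 by ring, coeff_succ_Kdiff,
      show (2 * m + 1 + 1) / 2 = m + 1 by omega, show (2 * m + 1) / 2 = m by omega,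
      Finset.sum_range_succ]
    ring

lemma coeff_Kdiff_recurrence (n : ℕ) :
    (1 - q ^ (n + 2)) * coeff (n + 2) Kdiff + q ^ 3 * (q ^ 2) ^ n * coeff n Kdiff = 0 := by
  obtain ⟨m, rfl | rfl⟩ := Nat.even_or_odd' n
  · rw [show 2 * m + 2 = 2 * (m + 1) by ring, coeff_Kdiff_even, coeff_Kdiff_even, poch2_succ,
      show 2 * (m + 1) * (2 * (m + 1) + 1) / 2 = 2 * m * (2 * m + 1) / 2 + (4 * m + 3) by
        rw [show 2 * (m + 1) = 2 * m + 1 + 1 by ring, succ_mul_succ_div_two, succ_mul_succ_div_two]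
        ring]
    field_simp [poch2_ne_zero, one_sub_q_pow_ne_zero]
    ring
  · rw [show 2 * m + 1 + 2 = 2 * (m + 1) + 1 by ring, coeff_Kdiff_odd, coeff_Kdiff_odd]
    ring

/-- `𝒦(x) - (1+xq)·𝒦(xq) + xq²(1+xq)·𝒦(xq²) - x³q⁶·𝒦(xq³) = 0`. -/
theorem stmt11 :
    Kcal - (1 + PowerSeries.C (R := K) q * PowerSeries.X) * rescale q Kcal
      + PowerSeries.X * PowerSeries.C (R := K) (q ^ 2) *
          (1 + PowerSeries.C (R := K) q * PowerSeries.X) * rescale (q ^ 2) Kcal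
      - PowerSeries.X ^ 3 * PowerSeries.C (R := K) (q ^ 6) * rescale (q ^ 3) Kcal = 0 := by
  rw [qDifference_factor, ← Kdiff]
  ext n
  simp only [map_add, map_sub, coeff_rescale, mul_assoc, coeff_X_pow_mul', coeff_C_mul]
  rcases n with _ | _ | n
  · simp
  · simp [coeff_Kdiff_odd 0]
  · rw [if_pos (by omega), show n + 1 + 1 - 2 = n by omega, map_zero]
    linear_combination coeff_Kdiff_recurrence n

end FC
end
end
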